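/- Rate-distortion function of erased fair coin flips: let S be an equiprobable binary source observed through a binary erasure channel with erasure rate δ ∈ (0,1), with bit-error (Hamming) distortion d(s, z) = 1{s ≠ z} measured against the clean source. For δ/2 ≤ d ≤ 1/2, the noisy rate-distortion function equals R(d) = (1 − δ)·( log 2 − h( (d − δ/2)/(1 − δ) ) ), where h is the binary entropy function; the minimum is achieved by the equiprobable reproduction distribution P_{Z*}(0) = P_{Z*}(1) = 1/2 together with the backward channel P_{X|Z*}(b|b) = 1 − d − δ/2, P_{X|Z*}(a|b) = d − δ/2 for a ≠ b with a, b ∈ {0,1}, and P_{X|Z*}(?|b) = δ. -/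

import Mathlib

open scoped BigOperators

noncomputable section

/-- `p` is a probability mass function on a finite type. -/
def IsPMF {α : Type*} [Fintype α] (p : α → ℝ) : Prop :=
  (∀ a, 0 ≤ p a) ∧ ∑ a, p a = 1

/-- `W` is a transition probability kernel (a random transformation). -/
def IsKernel {α β : Type*} [Fintype β] (W : α → β → ℝ) : Prop :=
  ∀ a, IsPMF (W a)

/-- Equiprobable binary source. -/
def PSb : Bool → ℝ := fun _ => 1 / 2

/-- Binary erasure channel with erasure rate `δ`; `none` is the erasure symbol `?`. -/
def Wbec (δ : ℝ) : Bool → Option Bool → ℝ :=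
  fun s x => if x = some s then 1 - δ else if x = none then δ else 0

/-- Bit-error (Hamming) distortion measured against the clean source. -/
def dstH : Bool → Bool → ℝ := fun s z => if s = z then 0 else 1

/-- Distribution of the channel output `X`. -/
def PXbec (δ : ℝ) (x : Option Bool) : ℝ := ∑ s, PSb s * Wbec δ s x

/-- Output marginal of a test channel `Q`. -/
def margZ (δ : ℝ) (Q : Option Bool → Bool → ℝ) (z : Bool) : ℝ :=
  ∑ x, PXbec δ x * Q x z

/-- Mutual information `I(X; Z)`. -/
def mutInfo (δ : ℝ) (Q : Option Bool → Bool → ℝ) : ℝ :=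
  ∑ x, ∑ z, PXbec δ x * Q x z * Real.log (Q x z / margZ δ Q z)

/-- Average bit-error distortion `E[dstH(S, Z)]` under `PSb ⊗ Wbec δ ⊗ Q`. -/
def avgDist (δ : ℝ) (Q : Option Bool → Bool → ℝ) : ℝ :=
  ∑ s, ∑ x, ∑ z, PSb s * Wbec δ s x * Q x z * dstH s z

/-- Noisy rate-distortion function
`R(d) = min { I(X;Z) : P_{Z|X}, E[dstH(S,Z)] ≤ d, S − X − Z }`. -/
def Rbes (δ d : ℝ) : ℝ :=
  sInf { r | ∃ Q : Option Bool → Bool → ℝ,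
      IsKernel Q ∧ avgDist δ Q ≤ d ∧ mutInfo δ Q = r }

/-- Binary entropy function. -/
def binEnt (p : ℝ) : ℝ := -p * Real.log p - (1 - p) * Real.log (1 - p)

/-- The optimal backward channel `P_{X|Z*}`. -/
def backB (δ d : ℝ) : Bool → Option Bool → ℝ :=
  fun b x => if x = some b then 1 - d - δ / 2 else if x = none then δ else d - δ / 2

/-- The forward test channel induced by equiprobable `P_{Z*}` and the backward
channel `backB`: `Q*(z|x) = P_{Z*}(z) P_{X|Z*}(x|z) / P_X(x)`. -/
def QstBes (δ d : ℝ) : Option Bool → Bool → ℝ :=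
  fun x z => (1 / 2 * backB δ d z x) / PXbec δ x

/-! The converse is the variational lower bound `I(X;Z) ≥ E[ı(X;Z)]`, valid for every backward
kernel `r`, where `ı(x;z) = log (r(x|z) / P_X(x))`; it is the Gibbs inequality
`a - b ≤ a log (a / b)` summed over the joint distribution. For `r = backB` the information density
takes only the values `0`, `log (2(1-p))` and `log (2p)` with `p = (d - δ/2)/(1 - δ)`, so the bound
depends on `Q` only through its crossover probability `t` on unerased symbols; it is affine and
decreasing in `t`, and the distortion constraint forces `t ≤ p`, where it equals
`(1-δ)(log 2 - h(p))`. The test channel `Q*` attains this value, because Bayes' rule together with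
its equiprobable output turns `log (Q*(z|x) / P_{Z*}(z))` into exactly that information density. -/

open Real

lemma sub_le_mul_log_div {a b : ℝ} (ha : 0 ≤ a) (hb : 0 ≤ b) (hab : a ≠ 0 → 0 < b) :
    a - b ≤ a * log (a / b) := by
  rcases ha.eq_or_lt with rfl | ha
  · simpa using hb
  · have hb := hab ha.ne'
    have := one_sub_inv_le_log_of_pos (div_pos ha hb)
    rw [inv_div] at this
    calc a - b = a * (1 - b / a) := by field_simp
      _ ≤ a * log (a / b) := mul_le_mul_of_nonneg_left this ha.le

section VariationalBound

variable {α β : Type*} [Fintype α] [Fintype β]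

def mutualInfo (P : α → ℝ) (Q : α → β → ℝ) : ℝ :=
  ∑ x, ∑ z, P x * Q x z * log (Q x z / ∑ x', P x' * Q x' z)

lemma mul_log_div_add_sub_le {P q m r : ℝ} (hP : 0 ≤ P) (hq : 0 ≤ q) (hm : P * q ≤ m)
    (hr : 0 ≤ r) (hpos : P * q ≠ 0 → 0 < r) :
    P * q * log (r / P) + (P * q - m * r) ≤ P * q * log (q / m) := by
  rcases eq_or_ne (P * q) 0 with h | h
  · rw [h]
    nlinarith [mul_nonneg (h ▸ hm) hr]
  · have hP : 0 < P := hP.lt_of_ne (by rintro rfl; simp at h)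
    have hq : 0 < q := hq.lt_of_ne (by rintro rfl; simp at h)
    have hm : 0 < m := (mul_pos hP hq).trans_le hm
    have hr := hpos h
    have hsplit : log (q / m) = log (r / P) + log (P * q / (m * r)) := by
      rw [log_div hq.ne' hm.ne', log_div hr.ne' hP.ne', log_div h (by positivity),
        log_mul hP.ne' hq.ne', log_mul hm.ne' hr.ne']
      ring
    have := sub_le_mul_log_div (mul_pos hP hq).le (mul_pos hm hr).le fun _ => mul_pos hm hr
    rw [hsplit]
    linarith

theorem sum_mul_log_le_mutualInfo (P : α → ℝ) (Q : α → β → ℝ) (r : β → α → ℝ)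
    (hP : ∀ x, 0 ≤ P x) (hQ : ∀ x z, 0 ≤ Q x z) (hr : IsKernel r)
    (hpos : ∀ x z, P x * Q x z ≠ 0 → 0 < r z x) :
    ∑ x, ∑ z, P x * Q x z * log (r z x / P x) ≤ mutualInfo P Q := by
  set m : β → ℝ := fun z => ∑ x', P x' * Q x' z
  have hmass : ∑ x, ∑ z, m z * r z x = ∑ x, ∑ z, P x * Q x z := by
    calc ∑ x, ∑ z, m z * r z x = ∑ z, m z * ∑ x, r z x := by
          rw [Finset.sum_comm]
          simp_rw [Finset.mul_sum]
      _ = ∑ z, ∑ x, P x * Q x z := by simp only [(hr _).2, mul_one, m]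
      _ = _ := Finset.sum_comm
  have hgap : ∑ x, ∑ z, (P x * Q x z - m z * r z x) = 0 := by
    simp only [Finset.sum_sub_distrib, hmass, sub_self]
  calc ∑ x, ∑ z, P x * Q x z * log (r z x / P x)
      = ∑ x, ∑ z, (P x * Q x z * log (r z x / P x) + (P x * Q x z - m z * r z x)) := by
        simp only [Finset.sum_add_distrib, hgap, add_zero]
    _ ≤ mutualInfo P Q := by
        unfold mutualInfo
        gcongr with x _ z _
        exact mul_log_div_add_sub_le (hP x) (hQ x z)
          (Finset.single_le_sum (fun i _ => mul_nonneg (hP i) (hQ i z)) (Finset.mem_univ x))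
          ((hr z).1 x) (hpos x z)

end VariationalBound

lemma mul_log_two_mul (x : ℝ) : x * log (2 * x) = x * log 2 + x * log x := by
  rcases eq_or_ne x 0 with rfl | hx
  · simp
  · rw [log_mul two_ne_zero hx, mul_add]

lemma log_two_sub_binEnt (p : ℝ) :
    log 2 - binEnt p = (1 - p) * log (2 * (1 - p)) + p * log (2 * p) := by
  rw [mul_log_two_mul, mul_log_two_mul, binEnt]
  ring

lemma log_two_sub_binEnt_le {p t : ℝ} (ht : 0 ≤ t) (htp : t ≤ p) (hp : p ≤ 1 / 2) :
    log 2 - binEnt p ≤ (1 - t) * log (2 * (1 - p)) + t * log (2 * p) := by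
  have hlog : log (2 * p) ≤ log (2 * (1 - p)) := by
    rcases (ht.trans htp).eq_or_lt with rfl | hp0
    · simp [log_nonneg]
    · exact log_le_log (by positivity) (by linarith)
  rw [log_two_sub_binEnt]
  linarith [mul_nonneg (sub_nonneg.2 htp) (sub_nonneg.2 hlog)]

lemma PXbec_some (δ : ℝ) (b : Bool) : PXbec δ (some b) = (1 - δ) / 2 := by
  cases b <;> simp only [PXbec, PSb, Wbec, Fintype.sum_bool, Option.some.injEq, reduceCtorEq,
    reduceIte, Bool.true_eq_false, Bool.false_eq_true] <;> ring

lemma PXbec_none (δ : ℝ) : PXbec δ none = δ := by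
  simp [PXbec, PSb, Wbec]

lemma PXbec_pos {δ : ℝ} (hδ0 : 0 < δ) (hδ1 : δ < 1) (x : Option Bool) : 0 < PXbec δ x := by
  rcases x with _ | b
  · rwa [PXbec_none]
  · rw [PXbec_some]
    linarith

lemma isKernel_backB {δ d : ℝ} (hδ : 0 ≤ δ) (hd1 : δ / 2 ≤ d) (hd2 : d ≤ 1 - δ / 2) :
    IsKernel (backB δ d) := by
  intro z
  refine ⟨fun x => ?_, ?_⟩
  · unfold backB
    split_ifs <;> linarith
  · cases z <;> simp only [backB, Fintype.sum_option, Fintype.sum_bool, Option.some.injEq,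
      reduceCtorEq, reduceIte, Bool.true_eq_false, Bool.false_eq_true] <;> ring

/-- The crossover probability of `Q` on an unerased equiprobable input. -/
def flipProb (Q : Option Bool → Bool → ℝ) : ℝ :=
  (Q (some false) true + Q (some true) false) / 2

lemma le_two_mul_flipProb {Q : Option Bool → Bool → ℝ} (hQ : ∀ x z, 0 ≤ Q x z) {b z : Bool}
    (hbz : b ≠ z) : Q (some b) z ≤ 2 * flipProb Q := by
  have h₁ := hQ (some false) true
  have h₂ := hQ (some true) false
  cases b <;> cases z <;> first | contradiction | (simp only [flipProb]; linarith)

lemma avgDist_eq (δ : ℝ) {Q : Option Bool → Bool → ℝ} (hQ : ∑ z, Q none z = 1) :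
    avgDist δ Q = δ / 2 + (1 - δ) * flipProb Q := by
  rw [Fintype.sum_bool] at hQ
  simp only [avgDist, flipProb, PSb, Wbec, dstH, Fintype.sum_option, Fintype.sum_bool,
    Option.some.injEq, reduceCtorEq,
    reduceIte, Bool.true_eq_false, Bool.false_eq_true]
  linear_combination δ / 2 * hQ

def optInfoDensity (δ d : ℝ) (x : Option Bool) (z : Bool) : ℝ :=
  log (backB δ d z x / PXbec δ x)

section InfoDensity

variable {δ : ℝ} (d : ℝ)

lemma optInfoDensity_some_self (hδ1 : δ ≠ 1) (b : Bool) :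
    optInfoDensity δ d (some b) b = log (2 * (1 - (d - δ / 2) / (1 - δ))) := by
  have : 1 - δ ≠ 0 := sub_ne_zero.mpr (Ne.symm hδ1)
  rw [optInfoDensity, PXbec_some]
  congr 1
  simp only [backB, if_true]
  field_simp
  ring

lemma optInfoDensity_some_of_ne (hδ1 : δ ≠ 1) {b z : Bool} (hbz : b ≠ z) :
    optInfoDensity δ d (some b) z = log (2 * ((d - δ / 2) / (1 - δ))) := by
  have : 1 - δ ≠ 0 := sub_ne_zero.mpr (Ne.symm hδ1)
  rw [optInfoDensity, PXbec_some]
  congr 1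
  simp only [backB, Option.some.injEq, hbz, if_false, reduceCtorEq]
  field_simp

lemma optInfoDensity_none (z : Bool) : optInfoDensity δ d none z = 0 := by
  rcases eq_or_ne δ 0 with rfl | hδ0 <;> simp [optInfoDensity, backB, PXbec_none, *]

lemma sum_optInfoDensity (hδ1 : δ ≠ 1) {Q : Option Bool → Bool → ℝ}
    (hQ : ∀ b, ∑ z, Q (some b) z = 1) :
    ∑ x, ∑ z, PXbec δ x * Q x z * optInfoDensity δ d x z =
      (1 - δ) * ((1 - flipProb Q) * log (2 * (1 - (d - δ / 2) / (1 - δ)))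
        + flipProb Q * log (2 * ((d - δ / 2) / (1 - δ)))) := by
  have h0 := hQ false
  have h1 := hQ true
  simp only [Fintype.sum_option, Fintype.sum_bool] at h0 h1 ⊢
  rw [optInfoDensity_none, optInfoDensity_none, optInfoDensity_some_self d hδ1,
    optInfoDensity_some_self d hδ1, optInfoDensity_some_of_ne d hδ1 (by decide : true ≠ false),
    optInfoDensity_some_of_ne d hδ1 (by decide : false ≠ true), PXbec_some, PXbec_some, flipProb]
  linear_combination (1 - δ) / 2 * log (2 * (1 - (d - δ / 2) / (1 - δ))) * (h0 + h1)

end InfoDensity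

lemma backB_pos_of_ne_zero {δ d : ℝ} (hδ0 : 0 < δ) (hδ1 : δ < 1) (hd1 : δ / 2 ≤ d)
    (hd2 : d ≤ 1 / 2) {Q : Option Bool → Bool → ℝ} (hQ0 : ∀ x z, 0 ≤ Q x z)
    (hflip : flipProb Q ≤ (d - δ / 2) / (1 - δ)) {x : Option Bool} {z : Bool} (hxz : Q x z ≠ 0) :
    0 < backB δ d z x := by
  rcases x with _ | b
  · simpa [backB] using hδ0
  · rcases eq_or_ne b z with rfl | hbz
    · simp only [backB, if_true]
      linarith
    · simp only [backB, Option.some.injEq, hbz, if_false, reduceCtorEq]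
      refine (sub_nonneg.mpr hd1).lt_of_ne fun hd => hxz (le_antisymm ?_ (hQ0 _ _))
      rw [← hd, zero_div] at hflip
      linarith [le_two_mul_flipProb hQ0 hbz]

theorem rateBound_le_mutInfo {δ d : ℝ} (hδ0 : 0 < δ) (hδ1 : δ < 1) (hd1 : δ / 2 ≤ d)
    (hd2 : d ≤ 1 / 2) {Q : Option Bool → Bool → ℝ} (hQ : IsKernel Q) (hdist : avgDist δ Q ≤ d) :
    (1 - δ) * (log 2 - binEnt ((d - δ / 2) / (1 - δ))) ≤ mutInfo δ Q := by
  have h1δ : 0 < 1 - δ := by linarith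
  have hQ0 : ∀ x z, 0 ≤ Q x z := fun x => (hQ x).1
  have hflip0 : 0 ≤ flipProb Q := by
    have := hQ0 (some false) true
    have := hQ0 (some true) false
    rw [flipProb]
    positivity
  have hflip : flipProb Q ≤ (d - δ / 2) / (1 - δ) := by
    rw [avgDist_eq δ (hQ none).2] at hdist
    rw [le_div_iff₀ h1δ]
    linarith
  calc (1 - δ) * (log 2 - binEnt ((d - δ / 2) / (1 - δ)))
      ≤ (1 - δ) * ((1 - flipProb Q) * log (2 * (1 - (d - δ / 2) / (1 - δ)))
          + flipProb Q * log (2 * ((d - δ / 2) / (1 - δ)))) := by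
        gcongr
        exact log_two_sub_binEnt_le hflip0 hflip
          (by rw [div_le_iff₀ h1δ]; linarith)
    _ = ∑ x, ∑ z, PXbec δ x * Q x z * optInfoDensity δ d x z :=
        (sum_optInfoDensity d hδ1.ne fun b => (hQ (some b)).2).symm
    _ ≤ mutInfo δ Q :=
        sum_mul_log_le_mutualInfo _ Q _ (fun x => (PXbec_pos hδ0 hδ1 x).le) hQ0
          (isKernel_backB hδ0.le hd1 (by linarith))
          fun _ _ h => backB_pos_of_ne_zero hδ0 hδ1 hd1 hd2 hQ0 hflip (right_ne_zero_of_mul h)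

section OptimalTestChannel

variable {δ : ℝ} (d : ℝ)

lemma QstBes_none (hδ0 : δ ≠ 0) (z : Bool) : QstBes δ d none z = 1 / 2 := by
  simp only [QstBes, backB, PXbec_none, reduceCtorEq, if_false, if_true]
  field_simp

lemma QstBes_some_self (hδ1 : δ ≠ 1) (b : Bool) :
    QstBes δ d (some b) b = 1 - (d - δ / 2) / (1 - δ) := by
  have : 1 - δ ≠ 0 := sub_ne_zero.mpr (Ne.symm hδ1)
  simp only [QstBes, backB, PXbec_some, if_true]
  field_simp
  ring

lemma QstBes_some_of_ne (hδ1 : δ ≠ 1) {b z : Bool} (hbz : b ≠ z) :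
    QstBes δ d (some b) z = (d - δ / 2) / (1 - δ) := by
  have : 1 - δ ≠ 0 := sub_ne_zero.mpr (Ne.symm hδ1)
  simp only [QstBes, backB, PXbec_some, Option.some.injEq, hbz, if_false, reduceCtorEq]
  field_simp

lemma sum_QstBes_none (hδ0 : δ ≠ 0) : ∑ z, QstBes δ d none z = 1 := by
  simp only [Fintype.sum_bool, QstBes_none d hδ0]
  norm_num

lemma sum_QstBes_some (hδ1 : δ ≠ 1) (b : Bool) : ∑ z, QstBes δ d (some b) z = 1 := by
  cases b <;> simp [QstBes_some_self d hδ1, QstBes_some_of_ne d hδ1]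

lemma flipProb_QstBes (hδ1 : δ ≠ 1) : flipProb (QstBes δ d) = (d - δ / 2) / (1 - δ) := by
  rw [flipProb, QstBes_some_of_ne d hδ1 (by decide), QstBes_some_of_ne d hδ1 (by decide)]
  ring

lemma isKernel_QstBes (hδ0 : 0 < δ) (hδ1 : δ < 1) (hd1 : δ / 2 ≤ d) (hd2 : d ≤ 1 - δ / 2) :
    IsKernel (QstBes δ d) := by
  have h1δ : 0 < 1 - δ := by linarith
  rintro (_ | b)
  · exact ⟨fun z => by rw [QstBes_none d hδ0.ne']; norm_num, sum_QstBes_none d hδ0.ne'⟩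
  · refine ⟨fun z => ?_, sum_QstBes_some d hδ1.ne b⟩
    rcases eq_or_ne b z with rfl | hbz
    · rw [QstBes_some_self d hδ1.ne, sub_nonneg, div_le_one h1δ]
      linarith
    · rw [QstBes_some_of_ne d hδ1.ne hbz]
      exact div_nonneg (by linarith) h1δ.le

lemma margZ_QstBes (hδ0 : δ ≠ 0) (hδ1 : δ ≠ 1) (z : Bool) : margZ δ (QstBes δ d) z = 1 / 2 := by
  simp only [margZ, Fintype.sum_option, Fintype.sum_bool, PXbec_none, PXbec_some,
    QstBes_none d hδ0]
  cases z <;>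
    simp only [QstBes_some_self d hδ1, QstBes_some_of_ne d hδ1 (by decide : true ≠ false),
      QstBes_some_of_ne d hδ1 (by decide : false ≠ true)] <;> ring

lemma avgDist_QstBes (hδ0 : δ ≠ 0) (hδ1 : δ ≠ 1) : avgDist δ (QstBes δ d) = d := by
  have : 1 - δ ≠ 0 := sub_ne_zero.mpr (Ne.symm hδ1)
  rw [avgDist_eq δ (sum_QstBes_none d hδ0), flipProb_QstBes d hδ1]
  field_simp
  ring

lemma mutInfo_QstBes (hδ0 : δ ≠ 0) (hδ1 : δ ≠ 1) :
    mutInfo δ (QstBes δ d) = (1 - δ) * (log 2 - binEnt ((d - δ / 2) / (1 - δ))) := by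
  have hBayes : ∀ x z, QstBes δ d x z / margZ δ (QstBes δ d) z = backB δ d z x / PXbec δ x := by
    intro x z
    rw [margZ_QstBes d hδ0 hδ1, QstBes, mul_div_assoc, mul_div_cancel_left₀ _ (by norm_num)]
  calc mutInfo δ (QstBes δ d)
      = ∑ x, ∑ z, PXbec δ x * QstBes δ d x z * optInfoDensity δ d x z := by
        simp only [mutInfo, optInfoDensity, hBayes]
    _ = _ := by
        rw [sum_optInfoDensity d hδ1 (sum_QstBes_some d hδ1), flipProb_QstBes d hδ1,
          log_two_sub_binEnt]

end OptimalTestChannel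

/-- **Rate-distortion function of erased fair coin flips** (Eq. (41)): for a fair binary
source observed through a binary erasure channel with erasure rate `δ` and bit-error
distortion, for `δ/2 ≤ d ≤ 1/2`,
`R(d) = (1−δ)(log 2 − h((d − δ/2)/(1 − δ)))`, and the minimum is achieved by the
equiprobable reproduction distribution together with the stated backward channel. -/
theorem rate_distortion_erased_fair_coin_flips
    (δ d : ℝ) (hδ0 : 0 < δ) (hδ1 : δ < 1)
    (hd1 : δ / 2 ≤ d) (hd2 : d ≤ 1 / 2) :
    Rbes δ d = (1 - δ) * (Real.log 2 - binEnt ((d - δ / 2) / (1 - δ))) ∧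
    IsKernel (QstBes δ d) ∧
    avgDist δ (QstBes δ d) ≤ d ∧
    mutInfo δ (QstBes δ d) = Rbes δ d ∧
    (∀ z, margZ δ (QstBes δ d) z = 1 / 2) := by
  have hK : IsKernel (QstBes δ d) := isKernel_QstBes d hδ0 hδ1 hd1 (by linarith)
  have hdist : avgDist δ (QstBes δ d) ≤ d := (avgDist_QstBes d hδ0.ne' hδ1.ne).le
  have hmut := mutInfo_QstBes d hδ0.ne' hδ1.ne
  have hR : Rbes δ d = (1 - δ) * (Real.log 2 - binEnt ((d - δ / 2) / (1 - δ))) := by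
    refine IsLeast.csInf_eq ⟨⟨QstBes δ d, hK, hdist, hmut⟩, ?_⟩
    rintro _ ⟨Q, hQ, hQdist, rfl⟩
    exact rateBound_le_mutInfo hδ0 hδ1 hd1 hd2 hQ hQdist
  exact ⟨hR, hK, hdist, hmut.trans hR.symm, margZ_QstBes d hδ0.ne' hδ1.ne⟩
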